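/- A bounded distributive lattice A is proHeyting if and only if A is κ-proHeyting for every infinite regular cardinal κ, i.e., if and only if BL_κ(DM A) = DM A for every infinite regular cardinal κ. -/
import Mathlib


open Cardinal

section Defs

variable {A : Type*} [SemilatticeInf A]

/-- `S ⊆ A` is admissible, with distributive join `x`: the join of `S` is `x` and
for every `a`, `a ⊓ x` is the join of `{a ⊓ s : s ∈ S}`. -/
def IsDistJoin (S : Set A) (x : A) : Prop :=
  IsLUB S x ∧ ∀ a : A, IsLUB ((fun s => a ⊓ s) '' S) (a ⊓ x)

/-- A D-ideal of the meet-semilattice `A`: a downset closed under joins of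
admissible subsets. -/
def IsDIdeal (E : Set A) : Prop :=
  IsLowerSet E ∧ ∀ S : Set A, S ⊆ E → ∀ x : A, IsDistJoin S x → x ∈ E

/-- `J` is the join of the family `T` in the Bruns–Lakser completion `BL A`:
the least D-ideal containing `⋃₀ T`. -/
def IsBLJoin (T : Set (Set A)) (J : Set A) : Prop :=
  IsDIdeal J ∧ ⋃₀ T ⊆ J ∧ ∀ E : Set A, IsDIdeal E → ⋃₀ T ⊆ E → J ⊆ E

/-- A family of D-ideals closed under finite meets (intersections, including the
top `Set.univ` of `BL A`) and under κ-joins computed in `BL A`. -/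
def BLClosed (κ : Cardinal) (C : Set (Set A)) : Prop :=
  Set.univ ∈ C ∧ (∀ E ∈ C, ∀ F ∈ C, E ∩ F ∈ C) ∧
    ∀ T : Set (Set A), T ⊆ C → #T < κ → ∀ J : Set A, IsBLJoin T J → J ∈ C

/-- The sub-κ-frame of `BL A` generated by `G`: the smallest subset of `BL A`
containing `G` and closed under finite meets and κ-joins computed in `BL A`. -/
def BLKappa (κ : Cardinal) (G : Set (Set A)) : Set (Set A) :=
  ⋂₀ {C : Set (Set A) | G ⊆ C ∧ C ⊆ {E : Set A | IsDIdeal E} ∧ BLClosed κ C}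

/-- A normal ideal: a downset `N` with `N = Nᵘˡ`. -/
def IsNormalIdeal (N : Set A) : Prop :=
  IsLowerSet N ∧ N = lowerBounds (upperBounds N)

/-- The relative annihilator `⟨a,b⟩ = {x : a ⊓ x ≤ b}`. -/
def RelAnn (a b : A) : Set A := {x : A | a ⊓ x ≤ b}

end Defs

/-- κ-completeness: every κ-join exists. -/
def IsKappaComplete (A : Type*) [Preorder A] (κ : Cardinal) : Prop :=
  ∀ S : Set A, #S < κ → ∃ x : A, IsLUB S x

/-- κJD: every existing κ-join is a distributive join. -/
def IsKappaJD (A : Type*) [SemilatticeInf A] (κ : Cardinal) : Prop :=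
  ∀ S : Set A, #S < κ → ∀ x : A, IsLUB S x → IsDistJoin S x

/-- A κ-frame: a κ-complete and κJD meet-semilattice. -/
def IsKappaFrame (A : Type*) [SemilatticeInf A] (κ : Cardinal) : Prop :=
  IsKappaComplete A κ ∧ IsKappaJD A κ

/-- A family of subsets of `α` closed under binary intersections is a
meet-semilattice in the inherited (inclusion) order, meets being intersections. -/
def subSemilatticeInf {α : Type*} (B : Set (Set α))
    (hmeet : ∀ E ∈ B, ∀ F ∈ B, E ∩ F ∈ B) : SemilatticeInf ↥B :=
  { (inferInstance : PartialOrder ↥B) with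
    inf := fun E F => ⟨E.1 ∩ F.1, hmeet _ E.2 _ F.2⟩
    inf_le_left := fun _ _ _ hx => hx.1
    inf_le_right := fun _ _ _ hx => hx.2
    le_inf := fun _ _ _ h1 h2 _ hx => ⟨h1 hx, h2 hx⟩ }

section AuxLemmas

variable {A : Type*} [SemilatticeInf A]

lemma lbub_mono {E F : Set A} (h : E ⊆ F) :
    lowerBounds (upperBounds E) ⊆ lowerBounds (upperBounds F) :=
  fun _ hx _ hu => hx fun _ he => hu (h he)

lemma subset_lbub (E : Set A) : E ⊆ lowerBounds (upperBounds E) :=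
  fun _ hx _ hu => hu hx

lemma isNormalIdeal_principal (x : A) : IsNormalIdeal {y : A | y ≤ x} := by
  constructor
  · exact fun a b hab hb => le_trans hab hb
  · apply Set.Subset.antisymm (subset_lbub _)
    exact fun y hy => hy (fun z hz => hz)

lemma isNormalIdeal_univ : IsNormalIdeal (Set.univ : Set A) := by
  refine ⟨fun _ _ _ _ => trivial, Set.Subset.antisymm (subset_lbub _) (fun _ _ => trivial)⟩

lemma isNormalIdeal_inter {N M : Set A} (hN : IsNormalIdeal N) (hM : IsNormalIdeal M) :
    IsNormalIdeal (N ∩ M) := by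
  refine ⟨fun a b hab hb => ⟨hN.1 hab hb.1, hM.1 hab hb.2⟩, ?_⟩
  apply Set.Subset.antisymm (subset_lbub _)
  intro x hx
  constructor
  · rw [hN.2]; exact lbub_mono Set.inter_subset_left hx
  · rw [hM.2]; exact lbub_mono Set.inter_subset_right hx

lemma isDIdeal_of_isNormalIdeal {N : Set A} (h : IsNormalIdeal N) : IsDIdeal N := by
  refine ⟨h.1, fun S hS x hx => ?_⟩
  rw [h.2]
  exact fun u hu => hx.1.2 fun s hs => hu (hS hs)

lemma isDIdeal_relAnn (a b : A) : IsDIdeal (RelAnn a b) := by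
  constructor
  · intro x y hxy hy
    exact le_trans (inf_le_inf_left a hxy) hy
  · intro S hS x hx
    have : a ⊓ x ≤ b := hx.2 a |>.2 (by rintro _ ⟨s, hs, rfl⟩; exact hS hs)
    exact this

/-- Under proHeyting, every D-ideal is a normal ideal. -/
lemma isNormalIdeal_of_isDIdeal (hpH : ∀ a b : A, IsNormalIdeal (RelAnn a b))
    {E : Set A} (hE : IsDIdeal E) : IsNormalIdeal E := by
  refine ⟨hE.1, Set.Subset.antisymm (subset_lbub _) ?_⟩
  intro x hx
  set S : Set A := {e | e ∈ E ∧ e ≤ x} with hSdef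
  have hSsub : S ⊆ E := fun e he => he.1
  have hmem : ∀ e ∈ E, x ⊓ e ∈ S := fun e he => ⟨hE.1 inf_le_right he, inf_le_left⟩
  have hlub : IsLUB S x := by
    constructor
    · exact fun e he => he.2
    · intro y hy
      have hEsub : E ⊆ RelAnn x y := fun e he => hy (hmem e he)
      have : x ∈ RelAnn x y := by
        rw [(hpH x y).2]; exact lbub_mono hEsub hx
      simpa [RelAnn] using this
  refine hE.2 S hSsub x ⟨hlub, fun a => ?_⟩
  constructor
  · rintro _ ⟨e, he, rfl⟩
    exact inf_le_inf_left a he.2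
  · intro y hy
    have hEsub : E ⊆ RelAnn (a ⊓ x) y := by
      intro e he
      have h1 : a ⊓ (x ⊓ e) ≤ y := hy ⟨x ⊓ e, hmem e he, rfl⟩
      have : a ⊓ x ⊓ e = a ⊓ (x ⊓ e) := by rw [inf_assoc]
      simpa [RelAnn, this] using h1
    have hxmem : x ∈ RelAnn (a ⊓ x) y := by
      rw [(hpH (a ⊓ x) y).2]; exact lbub_mono hEsub hx
    have : a ⊓ x ⊓ x = a ⊓ x := by rw [inf_assoc, inf_idem]
    simpa [RelAnn, this] using hxmem

/-- Every D-ideal is the BL-join of the principal ideals it contains. -/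
lemma isBLJoin_principal {E : Set A} (hE : IsDIdeal E) :
    IsBLJoin ((fun x => {y : A | y ≤ x}) '' E) E := by
  refine ⟨hE, ?_, ?_⟩
  · rintro y ⟨_, ⟨x, hx, rfl⟩, hy⟩
    exact hE.1 hy hx
  · intro F _ hsub x hx
    exact hsub ⟨{y | y ≤ x}, ⟨x, hx, rfl⟩, le_refl x⟩

end AuxLemmas

/-- A bounded distributive lattice `A` is proHeyting (every relative
annihilator of `A` is a normal ideal) iff `A` is κ-proHeyting for every infinite
regular cardinal `κ`, i.e. iff `BL_κ(DM A) = DM A` for every infinite regular `κ`. -/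
theorem proHeyting_iff_forall_kappaProHeyting (A : Type*) [DistribLattice A] [BoundedOrder A] :
    (∀ a b : A, IsNormalIdeal (RelAnn a b)) ↔
      ∀ κ : Cardinal, κ.IsRegular →
        BLKappa κ {N : Set A | IsNormalIdeal N} = {N : Set A | IsNormalIdeal N} := by
  constructor
  · intro hpH κ _
    apply Set.Subset.antisymm
    · apply Set.sInter_subset_of_mem
      refine ⟨subset_rfl, fun N hN => isDIdeal_of_isNormalIdeal hN, ?_, ?_, ?_⟩
      · exact isNormalIdeal_univ
      · exact fun _ hE _ hF => isNormalIdeal_inter hE hF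
      · exact fun T _ _ J hJ => isNormalIdeal_of_isDIdeal hpH hJ.1
    · exact fun N hN => Set.mem_sInter.2 fun C hC => hC.1 hN
  · intro h a b
    have key : ∀ E : Set A, IsDIdeal E → IsNormalIdeal E := by
      intro E hE
      set c : Cardinal := max (#(Set A)) Cardinal.aleph0 with hc
      have hreg : (Order.succ c).IsRegular :=
        Cardinal.isRegular_succ (le_max_right _ _)
      have hcard : #((fun x => {y : A | y ≤ x}) '' E : Set (Set A)) < Order.succ c :=
        lt_of_le_of_lt (le_trans (Cardinal.mk_set_le _) (le_max_left _ _)) (Order.lt_succ c)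
      have hmem : E ∈ BLKappa (Order.succ c) {N : Set A | IsNormalIdeal N} := by
        intro C hC
        refine hC.2.2.2.2 _ ?_ hcard E (isBLJoin_principal hE)
        rintro _ ⟨x, _, rfl⟩
        exact hC.1 (isNormalIdeal_principal x)
      rw [h (Order.succ c) hreg] at hmem
      exact hmem
    exact key _ (isDIdeal_relAnn a b)
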